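/- arXiv:2002.06150 — 3 statements merged into one kernel-verified Lean document; each statement's English description precedes it below -/
import Mathlib

section
/- Let $(h^m)$ be a sequence in $L^1((0,T))$ bounded in the $L^1$ norm, converging almost everywhere on $(0,T)$ to a function $h\in L^1((0,T))$. Let $p:[0,\infty)\to\mathbb{R}$ be continuous with $p(s)>0$ for all $s$ and $\lim_{s\to\infty}p(s)=0$. Then there exists a function $h_0$ equal to $h$ almost everywhere on $(0,T)$ such that for every $\alpha>0$, $\lim_{m\to\infty}\int_0^T |h^m(t)\,p(|h^m(t)|)^\alpha - h(t)\,p(|h_0(t)|)^\alpha|\,dt = 0$. -/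
/-!
Put `g x = x * p |x| ^ α`; we take `h₀ = h` and show `g ∘ f m → g ∘ h` in `L¹`. Since
`p s ^ α → 0`, `g` is continuous and `g x = o(x)` at infinity, so `‖g x‖ ≤ δ ‖x‖ + B` for every
`δ > 0` and some `B`. On the set where `‖g (f m x)‖ ≥ 2B` this gives `‖g (f m x)‖ ≤ 2δ ‖f m x‖`,
so the `L¹` bound on the `f m` makes the family `g ∘ f m` uniformly integrable, and Vitali's
convergence theorem applies.
-/

open MeasureTheory Filter Set Topology Asymptotics
open scoped ENNReal NNReal

variable {E F : Type*} [NormedAddCommGroup E] [NormedAddCommGroup F]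

theorem Asymptotics.IsLittleO.exists_norm_le_mul_add {g : E → F} (hg : Continuous g)
    (hgo : g =o[cocompact E] id) {ε : ℝ} (hε : 0 < ε) :
    ∃ B, ∀ x, ‖g x‖ ≤ ε * ‖x‖ + B := by
  obtain ⟨K, hK, hgK⟩ := mem_cocompact.mp (hgo.def hε)
  obtain ⟨B, hB⟩ := hK.exists_bound_of_continuousOn hg.continuousOn
  refine ⟨max B 0, fun x => ?_⟩
  have hεx := mul_nonneg hε.le (norm_nonneg x)
  by_cases hx : x ∈ K
  · linarith [hB x hx, le_max_left B 0]
  · have hgx : ‖g x‖ ≤ ε * ‖x‖ := hgK hx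
    linarith [le_max_right B 0]

variable {α : Type*} [MeasurableSpace α] {μ : Measure α}

theorem MeasureTheory.Integrable.comp_of_isLittleO [IsFiniteMeasure μ] {g : E → F}
    (hg : Continuous g) (hgo : g =o[cocompact E] id) {u : α → E} (hu : Integrable u μ) :
    Integrable (fun x => g (u x)) μ := by
  obtain ⟨B, hB⟩ := hgo.exists_norm_le_mul_add hg one_pos
  refine (hu.norm.const_mul 1).add (integrable_const B) |>.mono'
    (hg.comp_aestronglyMeasurable hu.aestronglyMeasurable) (ae_of_all _ fun x => hB (u x))

theorem unifIntegrable_comp_of_isLittleO {ι : Type*} {p : ℝ≥0∞} (hp : 1 ≤ p) (hp' : p ≠ ∞)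
    {g : E → F} (hg : Continuous g) (hgo : g =o[cocompact E] id) {f : ι → α → E}
    (hf : ∀ i, AEStronglyMeasurable (f i) μ) {C : ℝ≥0} (hC : ∀ i, eLpNorm (f i) p μ ≤ C) :
    UnifIntegrable (fun i x => g (f i x)) p μ := by
  refine unifIntegrable_of hp hp' (fun i => hg.comp_aestronglyMeasurable (hf i)) fun ε hε => ?_
  set δ := ε / (2 * (C + 1))
  have hδ : 0 < δ := by positivity
  obtain ⟨B, hB⟩ := hgo.exists_norm_le_mul_add hg hδ
  refine ⟨(2 * B).toNNReal, fun i => ?_⟩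
  have hpt : ∀ x, ‖{x | (2 * B).toNNReal ≤ ‖g (f i x)‖₊}.indicator (fun x => g (f i x)) x‖
      ≤ 2 * δ * ‖f i x‖ := by
    intro x
    by_cases hx : x ∈ {x | (2 * B).toNNReal ≤ ‖g (f i x)‖₊}
    · have hgx : 2 * B ≤ ‖g (f i x)‖ := (Real.le_coe_toNNReal (2 * B)).trans hx
      rw [indicator_of_mem hx]
      linarith [hB (f i x)]
    · rw [indicator_of_notMem hx, norm_zero]
      positivity
  calc _ ≤ ENNReal.ofReal (2 * δ) * eLpNorm (f i) p μ :=
        eLpNorm_le_mul_eLpNorm_of_ae_le_mul (ae_of_all _ hpt) p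
    _ ≤ ENNReal.ofReal (2 * δ) * ENNReal.ofReal C := by
        rw [ENNReal.ofReal_coe_nnreal]; gcongr; exact hC i
    _ ≤ ENNReal.ofReal ε := by
        rw [← ENNReal.ofReal_mul (by positivity)]
        refine ENNReal.ofReal_le_ofReal ?_
        rw [mul_div_assoc', div_mul_eq_mul_div, div_le_iff₀ (by positivity)]
        nlinarith [C.coe_nonneg]

theorem tendsto_integral_norm_comp_sub_of_isLittleO [IsFiniteMeasure μ] {g : E → F}
    (hg : Continuous g) (hgo : g =o[cocompact E] id) {f : ℕ → α → E} {h : α → E}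
    (hf : ∀ n, Integrable (f n) μ) {C : ℝ} (hC : ∀ n, ∫ x, ‖f n x‖ ∂μ ≤ C)
    (hh : Integrable h μ) (hfh : ∀ᵐ x ∂μ, Tendsto (fun n => f n x) atTop (𝓝 (h x))) :
    Tendsto (fun n => ∫ x, ‖g (f n x) - g (h x)‖ ∂μ) atTop (𝓝 0) := by
  have hC' : ∀ n, eLpNorm (f n) 1 μ ≤ C.toNNReal := fun n => by
    rw [eLpNorm_one_eq_lintegral_enorm, ← ofReal_integral_norm_eq_lintegral_enorm (hf n)]
    exact ENNReal.ofReal_le_ofReal (hC n)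
  have hL1 := tendsto_Lp_finite_of_tendsto_ae le_rfl ENNReal.one_ne_top
    (fun n => hg.comp_aestronglyMeasurable (hf n).aestronglyMeasurable)
    (memLp_one_iff_integrable.mpr (hh.comp_of_isLittleO hg hgo))
    (unifIntegrable_comp_of_isLittleO le_rfl ENNReal.one_ne_top hg hgo
      (fun n => (hf n).aestronglyMeasurable) hC')
    (hfh.mono fun x hx => (hg.tendsto _).comp hx)
  refine ((ENNReal.tendsto_toReal ENNReal.zero_ne_top).comp hL1).congr fun n => ?_
  rw [Function.comp_apply, eLpNorm_one_eq_lintegral_enorm, integral_norm_eq_lintegral_enorm]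
  · rfl
  · exact ((hg.comp_aestronglyMeasurable (hf n).aestronglyMeasurable).sub
      (hg.comp_aestronglyMeasurable hh.aestronglyMeasurable))

theorem isLittleO_mul_rpow_comp_abs {p : ℝ → ℝ} (hp : Tendsto p atTop (𝓝 0)) {r : ℝ}
    (hr : 0 < r) : (fun x : ℝ => x * p |x| ^ r) =o[cocompact ℝ] id := by
  have hpr : Tendsto (fun x : ℝ => p |x| ^ r) (cocompact ℝ) (𝓝 0) := by
    simpa [Real.zero_rpow hr.ne'] using
      (hp.comp (tendsto_norm_cocompact_atTop (E := ℝ))).rpow_const (Or.inr hr.le)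
  have := (isBigO_refl id (cocompact ℝ)).mul_isLittleO ((isLittleO_one_iff ℝ).mpr hpr)
  simp only [mul_one] at this
  exact this

theorem stmt0_general (T : ℝ)
    (f : ℕ → ℝ → ℝ) (h : ℝ → ℝ) (p : ℝ → ℝ)
    (hf_int : ∀ m, IntegrableOn (f m) (Set.Ioo 0 T))
    (hf_bdd : ∃ C : ℝ, ∀ m, (∫ t in Set.Ioo (0:ℝ) T, |f m t|) ≤ C)
    (h_int : IntegrableOn h (Set.Ioo 0 T))
    (hae : ∀ᵐ t ∂(volume.restrict (Set.Ioo (0:ℝ) T)),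
      Tendsto (fun m => f m t) atTop (𝓝 (h t)))
    (hp_cont : ContinuousOn p (Set.Ici 0))
    (hp_lim : Tendsto p atTop (𝓝 0)) :
    ∃ h₀ : ℝ → ℝ, (∀ᵐ t ∂(volume.restrict (Set.Ioo (0:ℝ) T)), h₀ t = h t) ∧
      ∀ α > (0:ℝ), Tendsto
        (fun m => ∫ t in Set.Ioo (0:ℝ) T,
          |f m t * p |f m t| ^ α - h t * p |h₀ t| ^ α|) atTop (𝓝 0) := by
  refine ⟨h, ae_of_all _ fun _ => rfl, fun α hα => ?_⟩
  obtain ⟨C, hC⟩ := hf_bdd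
  have hg : Continuous fun x : ℝ => x * p |x| ^ α :=
    continuous_id.mul <| (hp_cont.comp_continuous continuous_abs abs_nonneg).rpow_const
      fun _ => Or.inr hα.le
  exact tendsto_integral_norm_comp_sub_of_isLittleO hg (isLittleO_mul_rpow_comp_abs hp_lim hα)
    hf_int hC h_int hae

theorem stmt0 (T : ℝ) (hT : 0 < T)
    (f : ℕ → ℝ → ℝ) (h : ℝ → ℝ) (p : ℝ → ℝ)
    (hf_int : ∀ m, IntegrableOn (f m) (Set.Ioo 0 T))
    (hf_bdd : ∃ C : ℝ, ∀ m, (∫ t in Set.Ioo (0:ℝ) T, |f m t|) ≤ C)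
    (h_int : IntegrableOn h (Set.Ioo 0 T))
    (hae : ∀ᵐ t ∂(volume.restrict (Set.Ioo (0:ℝ) T)),
      Tendsto (fun m => f m t) atTop (𝓝 (h t)))
    (hp_cont : ContinuousOn p (Set.Ici 0))
    (hp_pos : ∀ s ∈ Set.Ici (0:ℝ), 0 < p s)
    (hp_lim : Tendsto p atTop (𝓝 0)) :
    ∃ h₀ : ℝ → ℝ, (∀ᵐ t ∂(volume.restrict (Set.Ioo (0:ℝ) T)), h₀ t = h t) ∧
      ∀ α > (0:ℝ), Tendsto
        (fun m => ∫ t in Set.Ioo (0:ℝ) T,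
          |f m t * p |f m t| ^ α - h t * p |h₀ t| ^ α|) atTop (𝓝 0) :=
  stmt0_general T f h p hf_int hf_bdd h_int hae hp_cont hp_lim
end

section
/- Let $f:[s,t]\to\mathbb{R}$ be continuous with $f(s)<R$ and $f(t)<R$, $R>0$. Among the connected components $(a,b)$ of $\{\tau: R<f(\tau)<2R\}$, call a component of type '12' if $f(a)=R$ and $f(b)=2R$, and of type '21' if $f(a)=2R$ and $f(b)=R$. Then the number of components of type '12' is finite, the number of components of type '21' is finite, and these two numbers are equal. -/
/-!
Finiteness: by uniform continuity of `f` on `[s, t]` there is `δ > 0` such that `f` moves by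
less than `R` on any interval shorter than `δ`; so every component of type `12` or `21` has
length at least `δ`, and components are disjoint, so there are finitely many of them.

Equality: pair a `12`-component `(a, b)` with the `21`-component `(d, c)` where `c` is the first
return of `f` to `R` after `b` (it exists since `f t < R`) and `d` the last time before `c`
at which `f = 2R`. Symmetrically, since `f s < R`, every `21`-component has such a partner
on its left. Between partners (`Linked` components) `f > R`, so no other component of either type lies
between them, which makes the pairing one-to-one.
-/

open Filter Set Topology

/-- `(a, b)` is a connected component of the open set `U ⊆ ℝ`:
a maximal open interval contained in `U`. -/
def IsCompOf (U : Set ℝ) (a b : ℝ) : Prop :=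
  a < b ∧ Set.Ioo a b ⊆ U ∧ a ∉ U ∧ b ∉ U

namespace IsCompOf

variable {U : Set ℝ} {a b a' b' : ℝ}

theorem Icc_subset {s t : ℝ} (h : IsCompOf U a b) (hU : U ⊆ Icc s t) : Icc a b ⊆ Icc s t := by
  rw [← closure_Ioo h.1.ne]
  exact closure_minimal (h.2.1.trans hU) isClosed_Icc

theorem eq_of_mem_Ico (h : IsCompOf U a b) (h' : IsCompOf U a' b') (ha' : a' ∈ Ico a b) :
    a = a' ∧ b = b' := by
  obtain rfl : a = a' := ha'.1.eq_of_not_lt fun hlt => h'.2.2.1 (h.2.1 ⟨hlt, ha'.2⟩)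
  refine ⟨rfl, ?_⟩
  rcases lt_trichotomy b b' with hlt | heq | hgt
  · exact absurd (h'.2.1 ⟨h.1, hlt⟩) h.2.2.2
  · exact heq
  · exact absurd (h.2.1 ⟨h'.1, hgt⟩) h'.2.2.2

end IsCompOf

theorem finite_setOf_isCompOf_le_sub {U : Set ℝ} {s t δ : ℝ} (hU : U ⊆ Icc s t)
    (hδ : 0 < δ) :
    {q : ℝ × ℝ | IsCompOf U q.1 q.2 ∧ δ ≤ q.2 - q.1}.Finite := by
  refine Finite.of_finite_image (f := fun q => ⌊(q.1 - s) / δ⌋)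
    ((finite_Icc 0 ⌊(t - s) / δ⌋).subset ?_) ?_
  · rintro _ ⟨q, ⟨hq, -⟩, rfl⟩
    obtain ⟨hsq, hqt⟩ := hq.Icc_subset hU ⟨le_rfl, hq.1.le⟩
    exact ⟨Int.floor_nonneg.2 (div_nonneg (by linarith) hδ.le),
      Int.floor_le_floor (div_le_div_of_nonneg_right (by linarith) hδ.le)⟩
  · rintro q ⟨hq, hqδ⟩ q' ⟨hq', hq'δ⟩ heq
    have hclose := Int.abs_sub_lt_one_of_floor_eq_floor heq
    rw [← sub_div, abs_div, abs_of_pos hδ, div_lt_one hδ, sub_sub_sub_cancel_right] at hclose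
    obtain ⟨hlo, hhi⟩ := abs_lt.1 hclose
    rcases le_total q.1 q'.1 with hle | hle
    · exact Prod.ext_iff.2 (hq.eq_of_mem_Ico hq' ⟨hle, by linarith⟩)
    · exact (Prod.ext_iff.2 (hq'.eq_of_mem_Ico hq ⟨hle, by linarith⟩)).symm

theorem finite_setOf_isCompOf_le_abs_sub {U : Set ℝ} {s t ε : ℝ} {f : ℝ → ℝ}
    (hf : ContinuousOn f (Icc s t)) (hU : U ⊆ Icc s t) (hε : 0 < ε) :
    {q : ℝ × ℝ | IsCompOf U q.1 q.2 ∧ ε ≤ |f q.2 - f q.1|}.Finite := by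
  obtain ⟨δ, hδ, hfδ⟩ := Metric.uniformContinuousOn_iff.1
    (isCompact_Icc.uniformContinuousOn_of_continuous hf) ε hε
  refine (finite_setOf_isCompOf_le_sub hU hδ).subset fun q ⟨hq, hqε⟩ => ⟨hq, ?_⟩
  by_contra! hshort
  have hfar := hfδ q.2 (hq.Icc_subset hU ⟨hq.1.le, le_rfl⟩)
    q.1 (hq.Icc_subset hU ⟨le_rfl, hq.1.le⟩)
    (by rwa [Real.dist_eq, abs_of_pos (sub_pos.2 hq.1)])
  rw [Real.dist_eq] at hfar
  linarith

namespace ContinuousOn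

variable {f : ℝ → ℝ} {x y L : ℝ}

theorem isCompact_Icc_inter_preimage_singleton (hf : ContinuousOn f (Icc x y)) :
    IsCompact (Icc x y ∩ f ⁻¹' {L}) :=
  isCompact_Icc.of_isClosed_subset
    (hf.preimage_isClosed_of_isClosed isClosed_Icc isClosed_singleton) inter_subset_left

theorem exists_eq_forall_Ico_lt (hxy : x ≤ y) (hf : ContinuousOn f (Icc x y))
    (hx : L ≤ f x) (hy : f y ≤ L) :
    ∃ c ∈ Icc x y, f c = L ∧ ∀ τ ∈ Ico x c, L < f τ := by
  obtain ⟨c, ⟨hc, hfc⟩, hleast⟩ := hf.isCompact_Icc_inter_preimage_singleton.exists_isLeast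
    (intermediate_value_Icc' hxy hf ⟨hy, hx⟩)
  refine ⟨c, hc, hfc, fun τ hτ => lt_of_not_ge fun hτL => ?_⟩
  have hτy : τ ≤ y := hτ.2.le.trans hc.2
  obtain ⟨σ, hσ, hfσ⟩ := intermediate_value_Icc' hτ.1 (hf.mono (Icc_subset_Icc le_rfl hτy))
    ⟨hτL, hx⟩
  exact (hleast ⟨⟨hσ.1, hσ.2.trans hτy⟩, hfσ⟩).not_gt (hσ.2.trans_lt hτ.2)

theorem exists_eq_forall_Ioc_gt (hxy : x ≤ y) (hf : ContinuousOn f (Icc x y))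
    (hx : L ≤ f x) (hy : f y ≤ L) :
    ∃ c ∈ Icc x y, f c = L ∧ ∀ τ ∈ Ioc c y, f τ < L := by
  obtain ⟨c, ⟨hc, hfc⟩, hgreatest⟩ :=
    hf.isCompact_Icc_inter_preimage_singleton.exists_isGreatest
      (intermediate_value_Icc' hxy hf ⟨hy, hx⟩)
  refine ⟨c, hc, hfc, fun τ hτ => lt_of_not_ge fun hτL => ?_⟩
  have hxτ : x ≤ τ := hc.1.trans hτ.1.le
  obtain ⟨σ, hσ, hfσ⟩ := intermediate_value_Icc' hτ.2 (hf.mono (Icc_subset_Icc hxτ le_rfl))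
    ⟨hy, hτL⟩
  exact (hgreatest ⟨⟨hxτ.trans hσ.1, hσ.2⟩, hfσ⟩).not_gt (hτ.1.trans_le hσ.1)

theorem exists_eq_forall_Ico_gt (hxy : x ≤ y) (hf : ContinuousOn f (Icc x y))
    (hx : f x ≤ L) (hy : L ≤ f y) :
    ∃ c ∈ Icc x y, f c = L ∧ ∀ τ ∈ Ico x c, f τ < L := by
  obtain ⟨c, hc, hfc, hlt⟩ := hf.neg.exists_eq_forall_Ico_lt hxy (neg_le_neg hx) (neg_le_neg hy)
  exact ⟨c, hc, neg_inj.1 hfc, fun τ hτ => neg_lt_neg_iff.1 (hlt τ hτ)⟩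

theorem exists_eq_forall_Ioc_lt (hxy : x ≤ y) (hf : ContinuousOn f (Icc x y))
    (hx : f x ≤ L) (hy : L ≤ f y) :
    ∃ c ∈ Icc x y, f c = L ∧ ∀ τ ∈ Ioc c y, L < f τ := by
  obtain ⟨c, hc, hfc, hgt⟩ := hf.neg.exists_eq_forall_Ioc_gt hxy (neg_le_neg hx) (neg_le_neg hy)
  exact ⟨c, hc, neg_inj.1 hfc, fun τ hτ => neg_lt_neg_iff.1 (hgt τ hτ)⟩

end ContinuousOn

section Crossings

variable {s t R : ℝ} {f : ℝ → ℝ}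

def levelBand (s t R : ℝ) (f : ℝ → ℝ) : Set ℝ :=
  {τ ∈ Ioo s t | R < f τ ∧ f τ < 2*R}

def upCrossings (s t R : ℝ) (f : ℝ → ℝ) : Set (ℝ × ℝ) :=
  {q : ℝ × ℝ | IsCompOf (levelBand s t R f) q.1 q.2 ∧ f q.1 = R ∧ f q.2 = 2*R}

def downCrossings (s t R : ℝ) (f : ℝ → ℝ) : Set (ℝ × ℝ) :=
  {q : ℝ × ℝ | IsCompOf (levelBand s t R f) q.1 q.2 ∧ f q.1 = 2*R ∧ f q.2 = R}

def Linked (R : ℝ) (f : ℝ → ℝ) (q p : ℝ × ℝ) : Prop :=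
  q.2 ≤ p.1 ∧ ∀ τ ∈ Ioo q.1 p.2, R < f τ

theorem levelBand_subset_Icc : levelBand s t R f ⊆ Icc s t :=
  fun _ hτ => Ioo_subset_Icc_self hτ.1

theorem finite_upCrossings (hR : 0 < R) (hf : ContinuousOn f (Icc s t)) :
    (upCrossings s t R f).Finite :=
  (finite_setOf_isCompOf_le_abs_sub hf levelBand_subset_Icc hR).subset fun q ⟨hq, hfa, hfb⟩ =>
    ⟨hq, by rw [hfa, hfb, two_mul, add_sub_cancel_right, abs_of_pos hR]⟩

theorem finite_downCrossings (hR : 0 < R) (hf : ContinuousOn f (Icc s t)) :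
    (downCrossings s t R f).Finite :=
  (finite_setOf_isCompOf_le_abs_sub hf levelBand_subset_Icc hR).subset fun q ⟨hq, hfa, hfb⟩ =>
    ⟨hq, by rw [hfa, hfb, two_mul, sub_add_cancel_left, abs_neg, abs_of_pos hR]⟩

theorem exists_linked_downCrossing (hR : 0 < R) (hf : ContinuousOn f (Icc s t)) (hft : f t < R)
    {q : ℝ × ℝ} (hq : q ∈ upCrossings s t R f) :
    ∃ p ∈ downCrossings s t R f, Linked R f q p := by
  obtain ⟨a, b⟩ := q
  obtain ⟨hcomp, -, hfb⟩ := hq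
  obtain ⟨hab, hsub, -, -⟩ := id hcomp
  have hsa : s ≤ a := (hcomp.Icc_subset levelBand_subset_Icc ⟨le_rfl, hab.le⟩).1
  have hbt : b ≤ t := (hcomp.Icc_subset levelBand_subset_Icc ⟨hab.le, le_rfl⟩).2
  obtain ⟨c, hc, hfc, habove⟩ :=
    (hf.mono (Icc_subset_Icc (hsa.trans hab.le) le_rfl)).exists_eq_forall_Ico_lt hbt
      (by linarith) hft.le
  obtain ⟨d, hd, hfd, hbelow⟩ :=
    (hf.mono (Icc_subset_Icc (hsa.trans hab.le) hc.2)).exists_eq_forall_Ioc_gt (L := 2 * R) hc.1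
      (by linarith) (by linarith)
  have hdc : d < c := hd.2.lt_of_ne (by rintro rfl; linarith)
  refine ⟨(d, c), ⟨⟨hdc, fun τ hτ => ⟨⟨by linarith [hd.1, hτ.1], hτ.2.trans_le hc.2⟩,
    habove τ ⟨hd.1.trans hτ.1.le, hτ.2⟩, hbelow τ ⟨hτ.1, hτ.2.le⟩⟩,
    fun h => h.2.2.ne hfd, fun h => h.2.1.ne' hfc⟩, hfd, hfc⟩, hd.1, fun τ hτ => ?_⟩
  rcases lt_or_ge τ b with hτb | hbτ
  · exact (hsub ⟨hτ.1, hτb⟩).2.1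
  · exact habove τ ⟨hbτ, hτ.2⟩

theorem exists_linked_upCrossing (hR : 0 < R) (hf : ContinuousOn f (Icc s t)) (hfs : f s < R)
    {p : ℝ × ℝ} (hp : p ∈ downCrossings s t R f) :
    ∃ q ∈ upCrossings s t R f, Linked R f q p := by
  obtain ⟨c, d⟩ := p
  obtain ⟨hcomp, hfc, -⟩ := hp
  obtain ⟨hcd, hsub, -, -⟩ := id hcomp
  have hsc : s ≤ c := (hcomp.Icc_subset levelBand_subset_Icc ⟨le_rfl, hcd.le⟩).1
  have hdt : d ≤ t := (hcomp.Icc_subset levelBand_subset_Icc ⟨hcd.le, le_rfl⟩).2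
  obtain ⟨a, ha, hfa, habove⟩ :=
    (hf.mono (Icc_subset_Icc le_rfl (hcd.le.trans hdt))).exists_eq_forall_Ioc_lt hsc hfs.le
      (by linarith)
  obtain ⟨b, hb, hfb, hbelow⟩ :=
    (hf.mono (Icc_subset_Icc ha.1 (hcd.le.trans hdt))).exists_eq_forall_Ico_gt (L := 2 * R) ha.2
      (by linarith) (by linarith)
  have hab : a < b := hb.1.lt_of_ne (by rintro rfl; linarith)
  have hsa : s < a := ha.1.lt_of_ne (by rintro rfl; linarith)
  refine ⟨(a, b), ⟨⟨hab, fun τ hτ => ⟨⟨hsa.trans hτ.1, by linarith [hb.2, hτ.2]⟩,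
    habove τ ⟨hτ.1, hτ.2.le.trans hb.2⟩, hbelow τ ⟨hτ.1.le, hτ.2⟩⟩,
    fun h => h.2.1.ne' hfa, fun h => h.2.2.ne hfb⟩, hfa, hfb⟩, hb.2, fun τ hτ => ?_⟩
  rcases le_or_gt τ c with hτc | hcτ
  · exact habove τ ⟨hτ.1, hτc⟩
  · exact (hsub ⟨hcτ, hτ.2⟩).2.1

theorem Linked.eq_right {q p p' : ℝ × ℝ} (hq : q ∈ upCrossings s t R f)
    (hp : p ∈ downCrossings s t R f) (hp' : p' ∈ downCrossings s t R f)
    (h : Linked R f q p) (h' : Linked R f q p') : p = p' := by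
  wlog hle : p.1 ≤ p'.1 generalizing p p'
  · exact (this hp' hp h' h (le_of_not_ge hle)).symm
  by_cases hp'p : p'.1 < p.2
  · exact Prod.ext_iff.2 (hp.1.eq_of_mem_Ico hp'.1 ⟨hle, hp'p⟩)
  · have := h'.2 p.2 ⟨by linarith [hq.1.1, h.1, hp.1.1], by linarith [hp'.1.1]⟩
    linarith [hp.2.2]

theorem Linked.eq_left {q q' p : ℝ × ℝ} (hq : q ∈ upCrossings s t R f)
    (hq' : q' ∈ upCrossings s t R f) (hp : p ∈ downCrossings s t R f)
    (h : Linked R f q p) (h' : Linked R f q' p) : q = q' := by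
  wlog hle : q.1 ≤ q'.1 generalizing q q'
  · exact (this hq' hq h' h (le_of_not_ge hle)).symm
  by_cases hq'q : q'.1 < q.2
  · exact Prod.ext_iff.2 (hq.1.eq_of_mem_Ico hq'.1 ⟨hle, hq'q⟩)
  · have := h.2 q'.1 ⟨by linarith [hq.1.1], by linarith [hq'.1.1, h'.1, hp.1.1]⟩
    linarith [hq'.2.1]

theorem ncard_upCrossings_eq_ncard_downCrossings (hR : 0 < R) (hf : ContinuousOn f (Icc s t))
    (hfs : f s < R) (hft : f t < R) :
    (upCrossings s t R f).ncard = (downCrossings s t R f).ncard := by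
  choose! next hnext hlinked using
    fun q (hq : q ∈ upCrossings s t R f) => exists_linked_downCrossing hR hf hft hq
  refine ncard_congr (fun q _ => next q) hnext (fun q q' hq hq' h => ?_) (fun p hp => ?_)
  · exact Linked.eq_left hq hq' (hnext q hq) (hlinked q hq) (h ▸ hlinked q' hq')
  · obtain ⟨q, hq, hqp⟩ := exists_linked_upCrossing hR hf hfs hp
    exact ⟨q, hq, Linked.eq_right hq (hnext q hq) hp (hlinked q hq) hqp⟩

end Crossings

theorem stmt7_general (s t R : ℝ) (hR : 0 < R)
    (f : ℝ → ℝ) (hf : ContinuousOn f (Set.Icc s t))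
    (hfs : f s < R) (hft : f t < R)
    (U : Set ℝ) (hU : U = {τ ∈ Set.Ioo s t | R < f τ ∧ f τ < 2*R})
    (C12 C21 : Set (ℝ × ℝ))
    (hC12 : C12 = {q : ℝ × ℝ | IsCompOf U q.1 q.2 ∧ f q.1 = R ∧ f q.2 = 2*R})
    (hC21 : C21 = {q : ℝ × ℝ | IsCompOf U q.1 q.2 ∧ f q.1 = 2*R ∧ f q.2 = R}) :
    C12.Finite ∧ C21.Finite ∧ C12.ncard = C21.ncard := by
  subst hU hC12 hC21
  exact ⟨finite_upCrossings hR hf, finite_downCrossings hR hf,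
    ncard_upCrossings_eq_ncard_downCrossings hR hf hfs hft⟩

theorem stmt7 (s t R : ℝ) (hst : s < t) (hR : 0 < R)
    (f : ℝ → ℝ) (hf : ContinuousOn f (Set.Icc s t))
    (hfs : f s < R) (hft : f t < R)
    (U : Set ℝ) (hU : U = {τ ∈ Set.Ioo s t | R < f τ ∧ f τ < 2*R})
    (C12 C21 : Set (ℝ × ℝ))
    (hC12 : C12 = {q : ℝ × ℝ | IsCompOf U q.1 q.2 ∧ f q.1 = R ∧ f q.2 = 2*R})
    (hC21 : C21 = {q : ℝ × ℝ | IsCompOf U q.1 q.2 ∧ f q.1 = 2*R ∧ f q.2 = R}) :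
    C12.Finite ∧ C21.Finite ∧ C12.ncard = C21.ncard :=
  stmt7_general s t R hR f hf hfs hft U hU C12 C21 hC12 hC21
end

section
/- Let $f:[s,t]\to\mathbb{R}$ be continuous with $f(s)<R$ and $f(t)<R$, $R>0$. If there exists a connected component $(a,b)$ of $\{\tau: R<f(\tau)<2R\}$ with $f(a)=R$, $f(b)=2R$ (type '12'), then there exists a connected component $(c,d)$ with $f(c)=2R$, $f(d)=R$ (type '21'), and moreover one may take $b\le c$. -/
open Filter Set Topology

/-!
Starting from the right end `b` of the `12` component, where `f = 2R`, let `d` be the first point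
after `b` with `f d = R` (it exists because `f t < R`), and `c` the last point of `[b, d]` with
`f c = 2R`. On `(c, d)` the function stays strictly between `R` and `2R`, so `(c, d)` is a
component of type `21` lying to the right of `b`.
-/

theorem ContinuousOn.exists_first_mem_Ioc_eq {f : ℝ → ℝ} {p q y : ℝ} (hpq : p ≤ q)
    (hf : ContinuousOn f (Icc p q)) (hp : y < f p) (hq : f q ≤ y) :
    ∃ d ∈ Ioc p q, f d = y ∧ ∀ τ ∈ Ico p d, y < f τ := by
  set S := Icc p q ∩ f ⁻¹' {y}
  have hS : IsClosed S := hf.preimage_isClosed_of_isClosed isClosed_Icc isClosed_singleton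
  have hSne : S.Nonempty := by
    obtain ⟨τ, hτ, hfτ⟩ := intermediate_value_Icc' hpq hf ⟨hq, hp.le⟩
    exact ⟨τ, hτ, hfτ⟩
  have hSbdd : BddBelow S := ⟨p, fun x hx => hx.1.1⟩
  obtain ⟨⟨hpd, hdq⟩, hfd⟩ := hS.csInf_mem hSne hSbdd
  refine ⟨sInf S, ⟨hpd.lt_of_ne ?_, hdq⟩, hfd, fun τ ⟨hpτ, hτd⟩ => ?_⟩
  · rintro h
    rw [← h] at hfd
    exact hp.ne' hfd
  · by_contra! hτ
    have hτq : τ ≤ q := hτd.le.trans hdq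
    obtain ⟨σ, ⟨hpσ, hστ⟩, hfσ⟩ :=
      intermediate_value_Icc' hpτ (hf.mono (Icc_subset_Icc le_rfl hτq)) ⟨hτ, hp.le⟩
    have := csInf_le hSbdd ⟨⟨hpσ, hστ.trans hτq⟩, hfσ⟩
    linarith

theorem ContinuousOn.exists_last_mem_Ico_eq {f : ℝ → ℝ} {p q y : ℝ} (hpq : p ≤ q)
    (hf : ContinuousOn f (Icc p q)) (hp : y ≤ f p) (hq : f q < y) :
    ∃ c ∈ Ico p q, f c = y ∧ ∀ τ ∈ Ioc c q, f τ < y := by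
  have hg : ContinuousOn (fun x => -f (-x)) (Icc (-q) (-p)) :=
    (hf.comp continuousOn_neg fun x hx => ⟨le_neg.1 hx.2, neg_le.1 hx.1⟩).neg
  obtain ⟨d, ⟨hqd, hdp⟩, hgd, hgt⟩ :=
    hg.exists_first_mem_Ioc_eq (y := -y) (neg_le_neg hpq) (by simpa using hq) (by simpa using hp)
  refine ⟨-d, ⟨le_neg.1 hdp, neg_lt.1 hqd⟩, by simpa using hgd, fun τ ⟨hdτ, hτq⟩ => ?_⟩
  simpa using hgt (-τ) ⟨neg_le_neg hτq, neg_lt.1 hdτ⟩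

theorem stmt8_general (s t R : ℝ) (hR : 0 < R)
    (f : ℝ → ℝ) (hf : ContinuousOn f (Set.Icc s t))
    (hft : f t < R)
    (U : Set ℝ) (hU : U = {τ ∈ Set.Ioo s t | R < f τ ∧ f τ < 2*R})
    (a b : ℝ) (h12 : IsCompOf U a b) (hb : f b = 2*R) :
    ∃ c d : ℝ, IsCompOf U c d ∧ f c = 2*R ∧ f d = R ∧ b ≤ c := by
  obtain ⟨hab, hsub, -, -⟩ := h12
  subst hU
  obtain ⟨hsa, hbt⟩ : s ≤ a ∧ b ≤ t :=
    (Ioo_subset_Ioo_iff hab).1 (hsub.trans fun τ hτ => hτ.1)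
  have hfbt : ContinuousOn f (Icc b t) := hf.mono (Icc_subset_Icc (hsa.trans hab.le) le_rfl)
  obtain ⟨d, ⟨hbd, hdt⟩, hfd, hgt⟩ :=
    hfbt.exists_first_mem_Ioc_eq hbt (by linarith) hft.le
  obtain ⟨c, ⟨hbc, hcd⟩, hfc, hlt⟩ :=
    (hfbt.mono (Icc_subset_Icc le_rfl hdt)).exists_last_mem_Ico_eq hbd.le hb.ge (by linarith)
  refine ⟨c, d, ⟨hcd, fun τ ⟨hcτ, hτd⟩ => ?_, ?_, ?_⟩, hfc, hfd, hbc⟩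
  · exact ⟨⟨by linarith, by linarith⟩, hgt τ ⟨by linarith, hτd⟩, hlt τ ⟨hcτ, hτd.le⟩⟩
  · rintro ⟨-, -, h⟩
    linarith
  · rintro ⟨-, h, -⟩
    linarith

theorem stmt8 (s t R : ℝ) (hst : s < t) (hR : 0 < R)
    (f : ℝ → ℝ) (hf : ContinuousOn f (Set.Icc s t))
    (hfs : f s < R) (hft : f t < R)
    (U : Set ℝ) (hU : U = {τ ∈ Set.Ioo s t | R < f τ ∧ f τ < 2*R})
    (a b : ℝ) (h12 : IsCompOf U a b) (ha : f a = R) (hb : f b = 2*R) :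
    ∃ c d : ℝ, IsCompOf U c d ∧ f c = 2*R ∧ f d = R ∧ b ≤ c :=
  stmt8_general s t R hR f hf hft U hU a b h12 hb
end
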